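/- Let B be an nbc basis of a loopless, coloopless matroid M on linearly ordered ground set E of rank r+1 with |IA(B)| = k+1, and set S = B − IA(B), T = (E−B) − min(E−B). Define F_j = cl({e₁,…,e_j}) for 1 ≤ j ≤ r−k where S = {e₁ > ⋯ > e_{r−k}}, and G_j = cl*({e_j,…,e_{n−k−1}}) for r−k+1 ≤ j ≤ n−k−1 where T = {e_{r−k+1} < ⋯ < e_{n−k−1}}. Then the sequence of pairs F₁|E, …, F_{r−k}|E, E|G_{r−k+1}, …, E|G_{n−k−1} is a biflag of M. -/

import Mathlib

open Set

variable {α : Type*}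

namespace Matroid

/-- A circuit: a minimal dependent set. -/
def Circuit' (M : Matroid α) (C : Set α) : Prop :=
  C ⊆ M.E ∧ ¬ M.Indep C ∧ ∀ D, D ⊂ C → M.Indep D

/-- `M` has no loops. -/
def NoLoops (M : Matroid α) : Prop := ∀ e ∈ M.E, M.Indep {e}

/-- `M` has no coloops. -/
def NoColoops (M : Matroid α) : Prop := ∀ e ∈ M.E, M✶.Indep {e}

/-- A biflat of `M`. -/
def IsBiflat (M : Matroid α) (p : Set α × Set α) : Prop :=
  M.IsFlat p.1 ∧ M✶.IsFlat p.2 ∧ p.1.Nonempty ∧ p.2.Nonempty ∧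
    ¬ (p.1 = M.E ∧ p.2 = M.E) ∧ p.1 ∪ p.2 = M.E

/-- Compatibility of biflats. -/
def BiflatCompatible (p q : Set α × Set α) : Prop :=
  (p.1 ⊆ q.1 ∧ q.2 ⊆ p.2) ∨ (q.1 ⊆ p.1 ∧ p.2 ⊆ q.2)

/-- A biflag of `M`, as a set of biflats. -/
def IsBiflag (M : Matroid α) (S : Set (Set α × Set α)) : Prop :=
  (∀ p ∈ S, M.IsBiflat p) ∧ (∀ p ∈ S, ∀ q ∈ S, BiflatCompatible p q) ∧
    (⋃ p ∈ S, p.1 ∩ p.2) ≠ M.E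

/-- Externally active element. -/
def ExtActive [LinearOrder α] (M : Matroid α) (B : Set α) (i : α) : Prop :=
  i ∈ M.E \ B ∧ ∃ C, M.Circuit' C ∧ C ⊆ insert i B ∧ IsLeast C i

/-- Internally active element. -/
def IntActive [LinearOrder α] (M : Matroid α) (B : Set α) (i : α) : Prop :=
  i ∈ B ∧ ∃ C, M✶.Circuit' C ∧ C ⊆ insert i (M.E \ B) ∧ IsLeast C i

/-- Lexicographic comparison of finite subsets of a linear order. -/
def LexLE [LinearOrder α] (A B : Set α) : Prop :=
  A = B ∨ ∃ e, IsLeast ((A \ B) ∪ (B \ A)) e ∧ e ∈ A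


lemma exists_circuit'_subset (M : Matroid α) {X : Set α} (hX : X.Finite)
    (hXE : X ⊆ M.E) (hdep : ¬ M.Indep X) : ∃ C, C ⊆ X ∧ M.Circuit' C := by
  obtain ⟨C, ⟨hCX, hCdep⟩, hmin⟩ :=
    Set.exists_min_image {C | C ⊆ X ∧ ¬ M.Indep C} Set.ncard
      ((hX.finite_subsets).subset (fun C hC => hC.1)) ⟨X, subset_rfl, hdep⟩
  refine ⟨C, hCX, hCX.trans hXE, hCdep, fun D hD => ?_⟩
  by_contra hDdep
  have := hmin D ⟨hD.subset.trans hCX, hDdep⟩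
  exact absurd (Set.ncard_lt_ncard hD (hX.subset hCX)) (not_lt.2 this)

lemma Circuit'.mem_closure_diff' (M : Matroid α) {C : Set α} (hC : M.Circuit' C)
    {a : α} (ha : a ∈ C) : a ∈ M.closure (C \ {a}) := by
  have hI : M.Indep (C \ {a}) := hC.2.2 _ (sdiff_singleton_ssubset.2 ha)
  have hD : M.Dep (insert a (C \ {a})) := by
    rw [insert_diff_singleton, insert_eq_self.2 ha]
    exact ⟨hC.2.1, hC.1⟩
  exact ((hI.insert_dep_iff).1 hD).1

lemma flat_closure' (M : Matroid α) (X : Set α) : M.IsFlat (M.closure X) := by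
  rw [closure_def]
  have hne : Nonempty {F // M.IsFlat F ∧ X ∩ M.E ⊆ F} :=
    ⟨⟨M.E, M.ground_isFlat, inter_subset_right⟩⟩
  have h := IsFlat.iInter (M := M)
    (Fs := fun F : {F // M.IsFlat F ∧ X ∩ M.E ⊆ F} => F.1) (fun F => F.2.1)
  convert h using 1
  rw [sInter_eq_iInter]
  rfl

/-- Key witness lemma: an internally active element outside both closures. -/
lemma exists_witness' [LinearOrder α] (M : Matroid α) (hE : M.E.Finite)
    (B : Set α) (hB : M.IsBase B) (hnbc : ∀ i, ¬ M.ExtActive B i)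
    (x : α) (hx : IsLeast (M.E \ B) x) :
    ∃ i, i ∈ B ∧ M.IntActive B i ∧ i ∉ M.closure (B \ {i}) ∧
      i ∉ M✶.closure ((M.E \ B) \ {x}) := by
  have hxE : x ∈ M.E \ B := hx.1
  have hdep : M.Dep (insert x B) := hB.insert_dep hxE
  have hfin : (insert x B).Finite := hE.subset hdep.subset_ground
  obtain ⟨C, hCsub, hC⟩ := M.exists_circuit'_subset hfin hdep.subset_ground hdep.not_indep
  have hxC : x ∈ C := by
    by_contra hxC
    exact hC.2.1 (hB.indep.subset (fun a ha =>
      ((hCsub ha).resolve_left (by rintro rfl; exact hxC ha))))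
  obtain ⟨i, hiC, hile⟩ := Set.exists_min_image C id (hfin.subset hCsub) ⟨x, hxC⟩
  have hix : i ≠ x := by
    rintro rfl
    exact hnbc i ⟨hxE, C, hC, hCsub, hiC, fun b hb => hile b hb⟩
  have hiB : i ∈ B := (hCsub hiC).resolve_left hix
  have hiltx : i < x := lt_of_le_of_ne (hile x hxC) hix
  have hiE : i ∈ M.E := hB.subset_ground hiB
  have hD : M✶.IsBase (M.E \ B) := hB.compl_isBase_dual
  have hdep2 : M✶.Dep (insert i (M.E \ B)) := hD.insert_dep ⟨hiE, fun h => h.2 hiB⟩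
  obtain ⟨Cs, hCssub, hCs⟩ := M✶.exists_circuit'_subset (hE.subset hdep2.subset_ground)
    hdep2.subset_ground hdep2.not_indep
  have hiCs : i ∈ Cs := by
    by_contra hiCs
    exact hCs.2.1 (hD.indep.subset (fun a ha =>
      ((hCssub ha).resolve_left (by rintro rfl; exact hiCs ha))))
  have hIA : M.IntActive B i := by
    refine ⟨hiB, Cs, hCs, hCssub, hiCs, fun b hb => ?_⟩
    rcases hCssub hb with rfl | hb'
    · exact le_refl _
    · exact le_of_lt (lt_of_lt_of_le hiltx (hx.2 hb'))
  refine ⟨i, hiB, hIA, hB.indep.notMem_closure_diff_of_mem hiB, ?_⟩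
  intro hmem
  set T : Set α := (M.E \ B) \ {x} with hT
  have hTindep : M✶.Indep T := hD.indep.subset diff_subset
  have hiT : i ∉ T := fun h => h.1.2 hiB
  have hdep3 : M✶.Dep (insert i T) := hTindep.insert_dep_iff.2 ⟨hmem, hiT⟩
  set Z : Set α := insert x (B \ {i}) with hZ
  have hZE : Z ⊆ M.E := insert_subset hxE.1 (diff_subset.trans hB.subset_ground)
  have hCZ : C \ {i} ⊆ Z := by
    rintro a ⟨haC, hai⟩
    rcases hCsub haC with rfl | haB
    · exact mem_insert _ _
    · exact mem_insert_of_mem _ ⟨haB, hai⟩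
  have hiZ : i ∈ M.closure Z :=
    M.closure_subset_closure hCZ (Circuit'.mem_closure_diff' M hC hiC)
  have hBZ : B ⊆ M.closure Z := by
    intro b hb
    rcases eq_or_ne b i with rfl | hbi
    · exact hiZ
    · exact M.subset_closure Z hZE (mem_insert_of_mem _ ⟨hb, hbi⟩)
  have hspan : M.Spanning Z := by
    rw [spanning_iff_ground_subset_closure hZE, ← hB.closure_eq]
    exact M.closure_subset_closure_of_subset_closure hBZ
  have hcompl : M.E \ insert i T = Z := by
    ext a
    simp only [hT, hZ, mem_diff, mem_insert_iff, mem_singleton_iff]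
    constructor
    · rintro ⟨haE, hnot⟩
      push_neg at hnot
      obtain ⟨h1, h2⟩ := hnot
      by_cases hax : a = x
      · exact Or.inl hax
      · refine Or.inr ⟨?_, h1⟩
        by_contra haB
        exact hax (h2 ⟨haE, haB⟩)
    · rintro (rfl | ⟨haB, hai⟩)
      · exact ⟨hxE.1, by push_neg; exact ⟨fun h => (hxE.2 (h ▸ hiB)), fun _ => rfl⟩⟩
      · exact ⟨hB.subset_ground haB, by push_neg; exact ⟨hai, fun h => absurd haB h.2⟩⟩
  have hco : M.Coindep (insert i T) := by
    rw [coindep_iff_compl_spanning (insert_subset hiE (diff_subset.trans diff_subset)), hcompl]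
    exact hspan
  exact hdep3.not_indep hco.indep

/-- The nbc biflag: for an nbc basis `B` with `|IA(B)| = k+1`, the chain of pairs
`F₁|E, …, F_{r−k}|E, E|G_{r−k+1}, …, E|G_{n−k−1}` is a biflag of `M`. -/
theorem stmt19 [LinearOrder α] (M : Matroid α) (n r k : ℕ) (hE : M.E.Finite)
    (hcard : M.E.ncard = n + 1) (hrank : ∃ B₀, M.IsBase B₀ ∧ B₀.ncard = r + 1)
    (h0 : M.NoLoops) (h1 : M.NoColoops)
    (B : Set α) (hB : M.IsBase B) (hnbc : ∀ i, ¬ M.ExtActive B i)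
    (hIA : {i | M.IntActive B i}.ncard = k + 1)
    (x : α) (hx : IsLeast (M.E \ B) x)
    (e : ℕ → α)
    (hanti : ∀ i j, 1 ≤ i → i < j → j ≤ r - k → e j < e i)
    (hmono : ∀ i j, r - k + 1 ≤ i → i < j → j ≤ n - k - 1 → e i < e j)
    (hSim : e '' Set.Icc 1 (r - k) = B \ {i | M.IntActive B i})
    (hTim : e '' Set.Icc (r - k + 1) (n - k - 1) = (M.E \ B) \ {x}) :
    M.IsBiflag
      ((fun j => (M.closure (e '' Set.Icc 1 j), M.E)) '' Set.Icc 1 (r - k) ∪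
       (fun j => (M.E, M✶.closure (e '' Set.Icc j (n - k - 1)))) ''
         Set.Icc (r - k + 1) (n - k - 1)) := by
  obtain ⟨i, hiB, hiIA, hicl, hicl'⟩ := M.exists_witness' hE B hB hnbc x hx
  have hxE : x ∈ M.E \ B := hx.1
  have hiE : i ∈ M.E := hB.subset_ground hiB
  have hD : M✶.IsBase (M.E \ B) := hB.compl_isBase_dual
  -- basic subset facts
  have hAsub : ∀ j, j ∈ Set.Icc 1 (r - k) → e '' Set.Icc 1 j ⊆ B \ {i} := by
    intro j hj a ha
    have : a ∈ B \ {i' | M.IntActive B i'} := by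
      rw [← hSim]
      exact image_mono (f := e) (Icc_subset_Icc_right (mem_Icc.1 hj).2) ha
    exact ⟨this.1, fun h => this.2 (by rw [mem_singleton_iff] at h; rw [h]; exact hiIA)⟩
  have hAE : ∀ j, j ∈ Set.Icc 1 (r - k) → e '' Set.Icc 1 j ⊆ M.E := fun j hj =>
    (hAsub j hj).trans (diff_subset.trans hB.subset_ground)
  have hTsub : ∀ j, j ∈ Set.Icc (r - k + 1) (n - k - 1) →
      e '' Set.Icc j (n - k - 1) ⊆ (M.E \ B) \ {x} := by
    intro j hj
    rw [← hTim]
    exact image_mono (f := e) (Icc_subset_Icc_left (mem_Icc.1 hj).1)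
  have hTE : ∀ j, j ∈ Set.Icc (r - k + 1) (n - k - 1) →
      e '' Set.Icc j (n - k - 1) ⊆ M✶.E := fun j hj =>
    (hTsub j hj).trans (diff_subset.trans diff_subset)
  have hgroundflat : M✶.IsFlat M.E := by
    have := M✶.ground_isFlat
    rwa [dual_ground] at this
  have hxcl : x ∉ M✶.closure ((M.E \ B) \ {x}) :=
    hD.indep.notMem_closure_diff_of_mem hxE
  refine ⟨?_, ?_, ?_⟩
  · rintro p (⟨j, hj, rfl⟩ | ⟨j, hj, rfl⟩)
    · refine ⟨M.flat_closure' _, hgroundflat, ?_, ⟨x, hxE.1⟩, ?_, ?_⟩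
      · exact ⟨e 1, M.subset_closure _ (hAE j hj)
          ⟨1, mem_Icc.2 ⟨le_refl 1, (mem_Icc.1 hj).1⟩, rfl⟩⟩
      · rintro ⟨h1, -⟩
        have h1' : M.closure (e '' Set.Icc 1 j) = M.E := h1
        exact hicl (M.closure_subset_closure (hAsub j hj) (h1'.symm ▸ hiE))
      · exact union_eq_self_of_subset_left (M.closure_subset_ground _)
    · refine ⟨M.ground_isFlat, M✶.flat_closure' _, ⟨x, hxE.1⟩, ?_, ?_, ?_⟩
      · exact ⟨e j, M✶.subset_closure _ (hTE j hj)
          ⟨j, mem_Icc.2 ⟨le_refl j, (mem_Icc.1 hj).2⟩, rfl⟩⟩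
      · rintro ⟨-, h2⟩
        have h2' : M✶.closure (e '' Set.Icc j (n - k - 1)) = M.E := h2
        exact hxcl (M✶.closure_subset_closure (hTsub j hj) (h2'.symm ▸ hxE.1))
      · rw [union_eq_self_of_subset_right]
        have := M✶.closure_subset_ground (e '' Set.Icc j (n - k - 1))
        rwa [dual_ground] at this
  · have hdsub : ∀ X : Set α, M✶.closure X ⊆ M.E := by
      intro X
      have := M✶.closure_subset_ground X
      rwa [dual_ground] at this
    rintro p (⟨j, hj, rfl⟩ | ⟨j, hj, rfl⟩) q (⟨j', hj', rfl⟩ | ⟨j', hj', rfl⟩)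
    · rcases le_total j j' with h | h
      · exact Or.inl ⟨M.closure_subset_closure (image_mono (f := e) (Icc_subset_Icc_right h)),
          subset_rfl⟩
      · exact Or.inr ⟨M.closure_subset_closure (image_mono (f := e) (Icc_subset_Icc_right h)),
          subset_rfl⟩
    · exact Or.inl ⟨M.closure_subset_ground _, hdsub _⟩
    · exact Or.inr ⟨M.closure_subset_ground _, hdsub _⟩
    · rcases le_total j j' with h | h
      · exact Or.inl ⟨subset_rfl,
          M✶.closure_subset_closure (image_mono (f := e) (Icc_subset_Icc_left h))⟩
      · exact Or.inr ⟨subset_rfl,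
          M✶.closure_subset_closure (image_mono (f := e) (Icc_subset_Icc_left h))⟩
  · intro h
    have hi : i ∈ ⋃ p ∈ ((fun j => (M.closure (e '' Set.Icc 1 j), M.E)) '' Set.Icc 1 (r - k) ∪
       (fun j => (M.E, M✶.closure (e '' Set.Icc j (n - k - 1)))) ''
         Set.Icc (r - k + 1) (n - k - 1)), p.1 ∩ p.2 := by rw [h]; exact hiE
    simp only [mem_iUnion, exists_prop] at hi
    obtain ⟨p, hp, hip⟩ := hi
    rcases hp with ⟨j, hj, rfl⟩ | ⟨j, hj, rfl⟩
    · exact hicl (M.closure_subset_closure (hAsub j hj) hip.1)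
    · exact hicl' (M✶.closure_subset_closure (hTsub j hj) hip.2)

end Matroid
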